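/- arXiv:2603.26212 — 3 statements merged into one kernel-verified Lean document; each statement's English description precedes it below -/
import Mathlib

section
/- Let U and P be real normed vector spaces, and equip X = U × P with the norm ‖(u,p)‖ = (‖u‖_U² + ‖p‖_P²)^{1/2}. Let A : X × X → ℝ be a bilinear form and β > 0 a constant such that for every x ∈ X there exists y ∈ X with ‖y‖ = ‖x‖ and A(x,y) ≥ β‖x‖². Let γ ≥ 2/β², and let c : U × P → ℝ be a bilinear form with |c(v,p)| ≤ γ^{-1/2}·‖v‖_U·‖p‖_P for all v ∈ U and p ∈ P. Define Ã((u,p),(v,q)) := A((u,p),(v,q)) + c(v,p). Then for every x ∈ X there exists y ∈ X with ‖y‖ = ‖x‖ and Ã(x,y) ≥ (β/4)‖x‖², i.e., Ã satisfies an inf-sup condition with constant at least β/4. -/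
/-- Explicit-constant inf-sup stability of the perturbed saddle-point form:
if `A` satisfies an inf-sup condition with norm-matched test functions and constant `β`,
`γ ≥ 2/β²`, and the perturbation satisfies `|c(v,p)| ≤ γ^{-1/2}‖v‖‖p‖`, then the
perturbed form `Ã(x,y) = A(x,y) + c(y₁, x₂)` satisfies an inf-sup condition with
constant at least `β/4`. The norm on `X = U × P` is `‖(u,p)‖ = √(‖u‖² + ‖p‖²)`. -/
theorem perturbed_inf_sup_explicit_constant
    {U P : Type*} [NormedAddCommGroup U] [NormedSpace ℝ U]
    [NormedAddCommGroup P] [NormedSpace ℝ P]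
    (A : (U × P) →ₗ[ℝ] (U × P) →ₗ[ℝ] ℝ)
    (c : U →ₗ[ℝ] P →ₗ[ℝ] ℝ)
    (β γ : ℝ) (hβ : 0 < β) (hγ : 2 / β ^ 2 ≤ γ)
    (nX : U × P → ℝ)
    (hnX : ∀ x : U × P, nX x = Real.sqrt (‖x.1‖ ^ 2 + ‖x.2‖ ^ 2))
    (hA : ∀ x : U × P, ∃ y : U × P, nX y = nX x ∧ β * nX x ^ 2 ≤ A x y)
    (hc : ∀ (v : U) (p : P), |c v p| ≤ (Real.sqrt γ)⁻¹ * ‖v‖ * ‖p‖) :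
    ∀ x : U × P, ∃ y : U × P, nX y = nX x ∧
      β / 4 * nX x ^ 2 ≤ A x y + c y.1 x.2 := by
  intro x
  obtain ⟨y, hy, hAy⟩ := hA x
  refine ⟨y, hy, ?_⟩
  have hγ0 : (0:ℝ) < γ := lt_of_lt_of_le (by positivity) hγ
  have hnx0 : 0 ≤ nX x := by rw [hnX]; positivity
  have h1 : ‖y.1‖ ≤ nX x := by
    rw [← hy, hnX]
    have := Real.sqrt_le_sqrt (show ‖y.1‖^2 ≤ ‖y.1‖^2 + ‖y.2‖^2 from le_add_of_nonneg_right (by positivity))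
    simpa [Real.sqrt_sq (norm_nonneg _)] using this
  have h2 : ‖x.2‖ ≤ nX x := by
    rw [hnX]
    have := Real.sqrt_le_sqrt (show ‖x.2‖^2 ≤ ‖x.1‖^2 + ‖x.2‖^2 from le_add_of_nonneg_left (by positivity))
    simpa [Real.sqrt_sq (norm_nonneg _)] using this
  have hsg : (Real.sqrt γ)⁻¹ ≤ 3 * β / 4 := by
    have h43 : (4 / (3 * β)) ≤ Real.sqrt γ := by
      have : (4 / (3 * β)) ^ 2 ≤ γ := by
        refine le_trans ?_ hγ
        rw [div_pow, div_le_div_iff₀ (by positivity) (by positivity)]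
        nlinarith
      calc (4 / (3 * β)) = Real.sqrt ((4 / (3 * β)) ^ 2) := by
            rw [Real.sqrt_sq (by positivity)]
        _ ≤ Real.sqrt γ := Real.sqrt_le_sqrt this
    calc (Real.sqrt γ)⁻¹ ≤ (4 / (3 * β))⁻¹ := by
          apply inv_anti₀ (by positivity) h43
      _ = 3 * β / 4 := by field_simp
  have hcb : |c y.1 x.2| ≤ 3 * β / 4 * nX x ^ 2 := by
    calc |c y.1 x.2| ≤ (Real.sqrt γ)⁻¹ * ‖y.1‖ * ‖x.2‖ := hc _ _
      _ ≤ (3 * β / 4) * nX x * nX x := by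
          gcongr
          all_goals positivity
      _ = 3 * β / 4 * nX x ^ 2 := by ring
  have := abs_le.mp hcb
  nlinarith [this.1, hAy]
end

section
/- Let W be a real vector space and t : W × W → ℝ a symmetric positive semidefinite bilinear form. Let V ⊆ W be a finite-dimensional linear subspace, N a norm on V, s : V × V → ℝ a symmetric positive semidefinite bilinear form, τ > 0, and c > 0 a constant with t(v,v) + τ·s(v,v) ≥ c·N(v)² for all v ∈ V. For r ∈ W let π(r) ∈ V denote the unique element with t(π(r),q) + τ·s(π(r),q) = t(r,q) for all q ∈ V. Fix e ∈ V with t(e,e) > 0 and s(e,q) = 0 for all q ∈ V. If g ∈ W and x ∈ V satisfy t(x,q) + τ·s(x,q) = −t(g,q) for all q ∈ V with t(q,e) = 0, then there exists λ ∈ ℝ such that x = −π(g) + λ·e. -/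
/-!
Put `a(u, v) = t(u, v) + τ s(u, v)` on `V`. Coercivity makes `a` anisotropic, and `y = x + π(g)`
is `a`-orthogonal to the zero-mean subspace `ker t(·, e)`, as is `e` because `s(e, ·) = 0`.
Splitting `y = z + λ e` with `t(z, e) = 0` gives `a(z, z) = a(y, z) - λ a(e, z) = 0`, so `z = 0`.
-/

namespace LinearMap.BilinForm

variable {K M : Type*} [Field K] [AddCommGroup M] [Module K M]

theorem mem_span_singleton_of_orthogonal_ker (B : LinearMap.BilinForm K M)
    (hB : ∀ v, B v v = 0 → v = 0) (φ : M →ₗ[K] K) {e : M} (he : φ e ≠ 0)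
    (hBe : ∀ q, φ q = 0 → B e q = 0) {y : M} (hy : ∀ q, φ q = 0 → B y q = 0) :
    y ∈ K ∙ e := by
  set l := φ y / φ e
  have hz : φ (y - l • e) = 0 := by
    simp only [map_sub, map_smul, smul_eq_mul, l, div_mul_cancel₀ _ he, sub_self]
  have hzz : B (y - l • e) (y - l • e) = 0 := by
    rw [LinearMap.map_sub₂, LinearMap.map_smul₂, hy _ hz, hBe _ hz, smul_zero, sub_zero]
  rw [Submodule.mem_span_singleton]
  exact ⟨l, (sub_eq_zero.mp (hB _ hzz)).symm⟩

theorem eq_zero_of_apply_self_eq_zero_of_coercive {E : Type*}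
    [AddCommGroup E] [Module ℝ E] (B : LinearMap.BilinForm ℝ E) (N : E → ℝ)
    (hN_def : ∀ v, N v = 0 ↔ v = 0) {c : ℝ} (hc : 0 < c) (hcoer : ∀ v, c * N v ^ 2 ≤ B v v)
    {v : E} (hv : B v v = 0) : v = 0 := by
  have hNv : c * N v ^ 2 ≤ 0 := hv ▸ hcoer v
  exact (hN_def v).mp (pow_eq_zero_iff two_ne_zero |>.mp
    (le_antisymm (nonpos_of_mul_nonpos_right hNv hc) (sq_nonneg _)))

end LinearMap.BilinForm

def stabilisedForm {W : Type*} [AddCommGroup W] [Module ℝ W] (t : W →ₗ[ℝ] W →ₗ[ℝ] ℝ)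
    (V : Submodule ℝ W) (s : V →ₗ[ℝ] V →ₗ[ℝ] ℝ) (τ : ℝ) : LinearMap.BilinForm ℝ V :=
  t.compl₁₂ V.subtype V.subtype + τ • s

@[simp]
theorem stabilisedForm_apply {W : Type*} [AddCommGroup W] [Module ℝ W]
    (t : W →ₗ[ℝ] W →ₗ[ℝ] ℝ) (V : Submodule ℝ W) (s : V →ₗ[ℝ] V →ₗ[ℝ] ℝ) (τ : ℝ) (u v : V) :
    stabilisedForm t V s τ u v = t u v + τ * s u v :=
  rfl

theorem discrete_mass_conservation_pure_flux_general
    {W : Type*} [AddCommGroup W] [Module ℝ W]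
    (t : W →ₗ[ℝ] W →ₗ[ℝ] ℝ)
    (ht_symm : ∀ x y : W, t x y = t y x)
    (V : Submodule ℝ W)
    (N : V → ℝ)
    (hN_def : ∀ v : V, N v = 0 ↔ v = 0)
    (s : V →ₗ[ℝ] V →ₗ[ℝ] ℝ)
    (τ c : ℝ) (hc : 0 < c)
    (hcoer : ∀ v : V, c * N v ^ 2 ≤ t v v + τ * s v v)
    (π : W → V)
    (hπ : ∀ (r : W) (q : V), t (π r : W) (q : W) + τ * s (π r) q = t r (q : W))
    (e : V) (he : 0 < t (e : W) (e : W)) (hse : ∀ q : V, s e q = 0)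
    (g : W) (x : V)
    (hx : ∀ q : V, t (q : W) (e : W) = 0 →
      t (x : W) (q : W) + τ * s x q = -(t g (q : W))) :
    ∃ l : ℝ, x = -π g + l • e := by
  set B := stabilisedForm t V s τ
  have hB : ∀ v, B v v = 0 → v = 0 := fun v =>
    B.eq_zero_of_apply_self_eq_zero_of_coercive N hN_def hc hcoer
  let φ : V →ₗ[ℝ] ℝ := (t.flip e).comp V.subtype
  have hBe : ∀ q, φ q = 0 → B e q = 0 := fun q hq => by
    simp only [φ, LinearMap.comp_apply, LinearMap.flip_apply, Submodule.subtype_apply] at hq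
    simp [B, hse, ht_symm (e : W), hq]
  have hy : ∀ q, φ q = 0 → B (x + π g) q = 0 := fun q hq => by
    have hxq := hx q hq
    have hπq := hπ g q
    simp only [B, stabilisedForm_apply, map_add, LinearMap.add_apply]
    linarith
  obtain ⟨l, hl⟩ := Submodule.mem_span_singleton.mp
    (B.mem_span_singleton_of_orthogonal_ker hB φ he.ne' hBe hy)
  exact ⟨l, by rw [hl]; abel⟩

/-- Discrete mass conservation (case Γ_p = ∅, pure flux boundary conditions):
if `x ∈ V` satisfies the stabilised conservation equation
`t(x,q) + τ·s(x,q) = −t(g,q)` for all zero-mean `q ∈ V` (i.e. `t(q,e) = 0`),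
where `e ∈ V` has `t(e,e) > 0` and `s(e,·) = 0`, then `x = −π(g) + λ·e`
for some constant `λ ∈ ℝ`. -/
theorem discrete_mass_conservation_pure_flux
    {W : Type*} [AddCommGroup W] [Module ℝ W]
    (t : W →ₗ[ℝ] W →ₗ[ℝ] ℝ)
    (ht_symm : ∀ x y : W, t x y = t y x) (ht_pos : ∀ x : W, 0 ≤ t x x)
    (V : Submodule ℝ W) [FiniteDimensional ℝ V]
    (N : V → ℝ)
    (hN_nonneg : ∀ v : V, 0 ≤ N v)
    (hN_def : ∀ v : V, N v = 0 ↔ v = 0)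
    (hN_smul : ∀ (a : ℝ) (v : V), N (a • v) = |a| * N v)
    (hN_add : ∀ v w : V, N (v + w) ≤ N v + N w)
    (s : V →ₗ[ℝ] V →ₗ[ℝ] ℝ)
    (hs_symm : ∀ x y : V, s x y = s y x) (hs_pos : ∀ x : V, 0 ≤ s x x)
    (τ c : ℝ) (hτ : 0 < τ) (hc : 0 < c)
    (hcoer : ∀ v : V, c * N v ^ 2 ≤ t v v + τ * s v v)
    (π : W → V)
    (hπ : ∀ (r : W) (q : V), t (π r : W) (q : W) + τ * s (π r) q = t r (q : W))
    (e : V) (he : 0 < t (e : W) (e : W)) (hse : ∀ q : V, s e q = 0)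
    (g : W) (x : V)
    (hx : ∀ q : V, t (q : W) (e : W) = 0 →
      t (x : W) (q : W) + τ * s x q = -(t g (q : W))) :
    ∃ l : ℝ, x = -π g + l • e :=
  discrete_mass_conservation_pure_flux_general t ht_symm V N hN_def s τ c hc hcoer π hπ e he hse g x
    hx
end

section
/- Let W be a real vector space and t : W × W → ℝ a symmetric positive semidefinite bilinear form. Let V ⊆ W be a finite-dimensional linear subspace, N a norm on V, s : V × V → ℝ a symmetric positive semidefinite bilinear form, τ > 0, and c > 0 a constant with t(v,v) + τ·s(v,v) ≥ c·N(v)² for all v ∈ V. Assume additionally there is C > 0 with t(v,v) ≤ C·N(v)² for all v ∈ V. For r ∈ W let π(r) ∈ V denote the unique element with t(π(r),q) + τ·s(π(r),q) = t(r,q) for all q ∈ V. Then for every r ∈ W and every w ∈ V with s(w,q) = 0 for all q ∈ V, one has N(π(r) − w) ≤ (√C / c) · t(r − w, r − w)^{1/2}. -/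
/-- Cauchy–Schwarz for a positive semidefinite symmetric bilinear form. -/
lemma bilin_cauchy_schwarz {W : Type*} [AddCommGroup W] [Module ℝ W]
    (t : W →ₗ[ℝ] W →ₗ[ℝ] ℝ)
    (ht_symm : ∀ x y : W, t x y = t y x) (ht_pos : ∀ x : W, 0 ≤ t x x)
    (x y : W) : (t x y) ^ 2 ≤ t x x * t y y := by
  have key : ∀ l : ℝ, 0 ≤ (t y y) * (l * l) + (2 * t x y) * l + t x x := by
    intro l
    have h := ht_pos (x + l • y)
    have hxy := ht_symm y x
    simp only [map_add, map_smul, LinearMap.add_apply, LinearMap.smul_apply,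
      smul_eq_mul] at h
    have heq : t x x + l * t y x + l * (t x y + l * t y y)
        = (t y y) * (l * l) + (2 * t x y) * l + t x x := by rw [hxy]; ring
    rw [heq] at h
    exact h
  have hd := discrim_le_zero key
  unfold discrim at hd
  nlinarith [hd]

/-- Approximation of the stabilised projection (abstract core of Lemma 5.2):
for every `r ∈ W` and every element `w` of the stabilisation kernel,
`N(π(r) − w) ≤ (√C / c) · t(r − w, r − w)^{1/2}`. -/
theorem stabilised_projection_kernel_approx
    {W : Type*} [AddCommGroup W] [Module ℝ W]
    (t : W →ₗ[ℝ] W →ₗ[ℝ] ℝ)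
    (ht_symm : ∀ x y : W, t x y = t y x) (ht_pos : ∀ x : W, 0 ≤ t x x)
    (V : Submodule ℝ W) [FiniteDimensional ℝ V]
    (N : V → ℝ)
    (hN_nonneg : ∀ v : V, 0 ≤ N v)
    (hN_def : ∀ v : V, N v = 0 ↔ v = 0)
    (hN_smul : ∀ (a : ℝ) (v : V), N (a • v) = |a| * N v)
    (hN_add : ∀ v w : V, N (v + w) ≤ N v + N w)
    (s : V →ₗ[ℝ] V →ₗ[ℝ] ℝ)
    (hs_symm : ∀ x y : V, s x y = s y x) (hs_pos : ∀ x : V, 0 ≤ s x x)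
    (τ c : ℝ) (hτ : 0 < τ) (hc : 0 < c)
    (hcoer : ∀ v : V, c * N v ^ 2 ≤ t v v + τ * s v v)
    (C : ℝ) (hC : 0 < C)
    (hcont : ∀ v : V, t v v ≤ C * N v ^ 2)
    (π : W → V)
    (hπ : ∀ (r : W) (q : V), t (π r : W) (q : W) + τ * s (π r) q = t r (q : W)) :
    ∀ (r : W) (w : V), (∀ q : V, s w q = 0) →
      N (π r - w) ≤ (Real.sqrt C / c) * Real.sqrt (t (r - (w : W)) (r - (w : W))) := by
  intro r w hw
  set e : V := π r - w with he
  -- s e q = s (π r) q for any q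
  have hse : ∀ q : V, s e q = s (π r) q := by
    intro q
    have : s e q = s (π r) q - s w q := by
      simp [he, map_sub, LinearMap.sub_apply]
    rw [this, hw q, sub_zero]
  -- key identity: t e e + τ s e e = t (r - w) e
  have hkey : t (e : W) (e : W) + τ * s e e = t (r - (w : W)) (e : W) := by
    have hc1 : ((e : V) : W) = ((π r : V) : W) - ((w : V) : W) := by simp [he]
    have hπ1 := hπ r (π r)
    have hπ2 := hπ r w
    have hs1 : s (π r) w = 0 := by rw [hs_symm]; exact hw _
    have hs2 := hw (π r)
    have hs3 := hw w
    have ht1 := ht_symm ((w : V) : W) ((π r : V) : W)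
    simp only [he, AddSubgroupClass.coe_sub, map_sub, LinearMap.sub_apply,
      hs1, hs2, hs3]
    simp only [hs1, mul_zero, add_zero] at hπ2
    ring_nf
    linarith
  -- coercivity
  -- coercivity
  have hco := hcoer e
  have hst : s e e = s e e := rfl
  have hNe : 0 ≤ N e := hN_nonneg e
  have hTrw : 0 ≤ t (r - (w : W)) (r - (w : W)) := ht_pos _
  -- Cauchy–Schwarz
  have hcs := bilin_cauchy_schwarz t ht_symm ht_pos (r - (w : W)) (e : W)
  have htee : t (e : W) (e : W) ≤ C * N e ^ 2 := hcont e
  have htee0 : 0 ≤ t (e : W) (e : W) := ht_pos _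
  -- bound: t (r-w) e ≤ sqrt(T) * sqrt(C) * N e
  have hb : t (r - (w : W)) (e : W) ≤
      Real.sqrt (t (r - (w : W)) (r - (w : W))) * (Real.sqrt C * N e) := by
    have h1 : t (r - (w : W)) (e : W) ≤
        Real.sqrt (t (r - (w : W)) (r - (w : W))) * Real.sqrt (t (e : W) (e : W)) := by
      have := Real.sqrt_le_sqrt (le_of_eq rfl : (t (r - (w : W)) (e : W))^2 ≤ _)
      calc t (r - (w : W)) (e : W) ≤ |t (r - (w : W)) (e : W)| := le_abs_self _
        _ = Real.sqrt ((t (r - (w : W)) (e : W))^2) := (Real.sqrt_sq_eq_abs _).symm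
        _ ≤ Real.sqrt (t (r - (w : W)) (r - (w : W)) * t (e : W) (e : W)) :=
            Real.sqrt_le_sqrt hcs
        _ = _ := Real.sqrt_mul hTrw _
    have h2 : Real.sqrt (t (e : W) (e : W)) ≤ Real.sqrt C * N e := by
      have : Real.sqrt (t (e : W) (e : W)) ≤ Real.sqrt (C * N e ^ 2) :=
        Real.sqrt_le_sqrt htee
      rwa [Real.sqrt_mul hC.le, Real.sqrt_sq hNe] at this
    calc t (r - (w : W)) (e : W) ≤ _ := h1
      _ ≤ _ := by
        apply mul_le_mul_of_nonneg_left h2 (Real.sqrt_nonneg _)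
  -- combine: c N e ^2 ≤ sqrt T * sqrt C * N e
  have hmain : c * N e ^ 2 ≤ Real.sqrt (t (r - (w : W)) (r - (w : W))) * (Real.sqrt C * N e) := by
    calc c * N e ^ 2 ≤ t (e : W) (e : W) + τ * s e e := hco
      _ = t (r - (w : W)) (e : W) := hkey
      _ ≤ _ := hb
  rcases eq_or_lt_of_le hNe with h0 | h0
  · rw [← h0]
    positivity
  · have : c * N e ≤ Real.sqrt (t (r - (w : W)) (r - (w : W))) * Real.sqrt C := by
      have := hmain
      nlinarith [h0]
    rw [div_mul_eq_mul_div, le_div_iff₀ hc]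
    nlinarith [this]
end
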